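/- For matrices A₁, …, A_N with unit-norm columns, M(A₁ ⊗ ⋯ ⊗ A_N) = max over 1 ≤ i ≤ N of M(A_i). -/

import Mathlib

open Classical Kronecker

/-- Number of nonzero entries of a vector. -/
noncomputable def sparsity {n : Type*} (x : n → ℝ) : ℕ := Set.ncard {i | x i ≠ 0}

/-- The spark of a matrix: the minimal number of nonzero entries of a nonzero kernel
vector; if the kernel is trivial we use the convention `spark A = (number of columns) + 1`. -/
noncomputable def spark {m n : Type*} [Fintype m] [Fintype n] (A : Matrix m n ℝ) : ℕ :=
  if ∃ x : n → ℝ, x ≠ 0 ∧ A.mulVec x = 0 then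
    sInf {k | ∃ x : n → ℝ, x ≠ 0 ∧ A.mulVec x = 0 ∧ sparsity x = k}
  else Fintype.card n + 1

/-- Mutual incoherence: the largest absolute inner product of two distinct columns. -/
noncomputable def mutInc {m n : Type*} [Fintype m] (A : Matrix m n ℝ) : ℝ :=
  sSup {v | ∃ i j, i ≠ j ∧ v = |∑ k, A k i * A k j|}

/-- Off-diagonal mutual incoherence of two matrices. -/
noncomputable def mutIncOD {m n : Type*} [Fintype m] (A B : Matrix m n ℝ) : ℝ :=
  sSup {v | ∃ i j, i ≠ j ∧ v = |∑ k, A k i * B k j|}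

/-- Diagonal mutual incoherence of two matrices. -/
noncomputable def mutIncD {m n : Type*} [Fintype m] (A B : Matrix m n ℝ) : ℝ :=
  sSup {v | ∃ i, v = |∑ k, A k i * B k i|}

/-- Mutual incoherence of a matrix whose columns are renormalized. -/
noncomputable def mutIncN {m n : Type*} [Fintype m] (C : Matrix m n ℝ) : ℝ :=
  sSup {v | ∃ i j, i ≠ j ∧
    v = |∑ k, C k i * C k j| /
        (Real.sqrt (∑ k, (C k i) ^ 2) * Real.sqrt (∑ k, (C k j) ^ 2))}

/-- The `k`-restricted isometry constant of a matrix. -/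
noncomputable def ripConst {m n : Type*} [Fintype m] [Fintype n] (k : ℕ)
    (A : Matrix m n ℝ) : ℝ :=
  sInf {δ | 0 ≤ δ ∧ ∀ x : n → ℝ, sparsity x ≤ k →
    (1 - δ) * ∑ i, (x i) ^ 2 ≤ ∑ i, (A.mulVec x i) ^ 2 ∧
    ∑ i, (A.mulVec x i) ^ 2 ≤ (1 + δ) * ∑ i, (x i) ^ 2}

/-- Iterated Kronecker product of a family of matrices (up to the standard
reindexing of the row/column index sets). -/
noncomputable def kronFamily {N : ℕ} {m n : Fin N → ℕ}
    (A : ∀ i, Matrix (Fin (m i)) (Fin (n i)) ℝ) :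
    Matrix (∀ i, Fin (m i)) (∀ i, Fin (n i)) ℝ :=
  fun r c => ∏ i, A i (r i) (c i)

/-!
The inner product of two columns `c, d` of `A₁ ⊗ ⋯ ⊗ A_N` is the product over `i` of the inner
products of the columns `c i, d i` of `A_i`. Each factor has absolute value at most `1` by
Cauchy–Schwarz, and a factor with `c i ≠ d i` is at most `M(A_i)`, so `M(A₁ ⊗ ⋯ ⊗ A_N) ≤ max M(A_i)`.
Conversely, two columns that agree outside the `i`-th slot have inner product equal to that of
their `i`-th slots, since the remaining factors are squared norms of unit columns; taking the
pair attaining `M(A_i)` gives `M(A_i) ≤ M(A₁ ⊗ ⋯ ⊗ A_N)`.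
-/

section mutInc

variable {m n : Type*} [Fintype m]

lemma mutInc_nonneg (A : Matrix m n ℝ) : 0 ≤ mutInc A :=
  Real.sSup_nonneg fun _ ⟨_, _, _, hv⟩ => hv ▸ abs_nonneg _

lemma mutInc_le_of_forall_ne {A : Matrix m n ℝ} {b : ℝ}
    (h : ∀ i j, i ≠ j → |∑ k, A k i * A k j| ≤ b) (hb : 0 ≤ b) : mutInc A ≤ b :=
  Real.sSup_le (fun _ ⟨i, j, hij, hv⟩ => hv ▸ h i j hij) hb

variable [Fintype n]

lemma finite_setOf_mutInc (A : Matrix m n ℝ) :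
    {v | ∃ i j, i ≠ j ∧ v = |∑ k, A k i * A k j|}.Finite :=
  (Set.finite_range fun p : n × n => |∑ k, A k p.1 * A k p.2|).subset
    fun _ ⟨i, j, _, hv⟩ => ⟨(i, j), hv.symm⟩

lemma abs_sum_mul_le_mutInc (A : Matrix m n ℝ) {i j : n} (hij : i ≠ j) :
    |∑ k, A k i * A k j| ≤ mutInc A :=
  le_csSup (finite_setOf_mutInc A).bddAbove ⟨i, j, hij, rfl⟩

lemma exists_ne_mutInc_eq [Nontrivial n] (A : Matrix m n ℝ) :
    ∃ i j, i ≠ j ∧ mutInc A = |∑ k, A k i * A k j| := by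
  obtain ⟨i, j, hij⟩ := exists_pair_ne n
  have hne : {v | ∃ i j, i ≠ j ∧ v = |∑ k, A k i * A k j|}.Nonempty := ⟨_, i, j, hij, rfl⟩
  exact hne.csSup_mem (finite_setOf_mutInc A)

end mutInc

lemma abs_sum_mul_le_one {m : Type*} [Fintype m] {x y : m → ℝ}
    (hx : ∑ k, x k ^ 2 = 1) (hy : ∑ k, y k ^ 2 = 1) : |∑ k, x k * y k| ≤ 1 := by
  have h := Finset.sum_mul_sq_le_sq_mul_sq Finset.univ x y
  rw [hx, hy, one_mul] at h
  exact (sq_le_one_iff_abs_le_one _).mp h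

section kronFamily

variable {N : ℕ} {m n : Fin N → ℕ} (A : ∀ i, Matrix (Fin (m i)) (Fin (n i)) ℝ)

lemma sum_kronFamily_mul (c d : ∀ i, Fin (n i)) :
    ∑ r, kronFamily A r c * kronFamily A r d = ∏ i, ∑ k, A i k (c i) * A i k (d i) := by
  simp only [kronFamily, ← Finset.prod_mul_distrib]
  exact (Fintype.prod_sum fun i k => A i k (c i) * A i k (d i)).symm

variable {A} (hA : ∀ i j, ∑ k, (A i k j) ^ 2 = 1)
include hA

lemma sum_kronFamily_mul_update (c : ∀ i, Fin (n i)) (i : Fin N) (p q : Fin (n i)) :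
    ∑ r, kronFamily A r (Function.update c i p) * kronFamily A r (Function.update c i q) =
      ∑ k, A i k p * A i k q := by
  rw [sum_kronFamily_mul, Fintype.prod_eq_single i fun j hji => ?_]
  · simp only [Function.update_self]
  · simp only [Function.update_of_ne hji, ← sq, hA]

lemma abs_sum_kronFamily_mul_le {c d : ∀ i, Fin (n i)} {j : Fin N} (hj : c j ≠ d j) :
    |∑ r, kronFamily A r c * kronFamily A r d| ≤ mutInc (A j) := by
  rw [sum_kronFamily_mul, Finset.abs_prod, ← Finset.mul_prod_erase _ _ (Finset.mem_univ j)]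
  have hrest : ∏ i ∈ Finset.univ.erase j, |∑ k, A i k (c i) * A i k (d i)| ≤ 1 :=
    Finset.prod_le_one (fun _ _ => abs_nonneg _) fun i _ => abs_sum_mul_le_one (hA i _) (hA i _)
  exact (mul_le_of_le_one_right (abs_nonneg _) hrest).trans (abs_sum_mul_le_mutInc (A j) hj)

lemma mutInc_kronFamily_le {b : ℝ} (h : ∀ i, mutInc (A i) ≤ b) (hb : 0 ≤ b) :
    mutInc (kronFamily A) ≤ b := by
  refine mutInc_le_of_forall_ne (fun c d hcd => ?_) hb
  obtain ⟨j, hj⟩ := Function.ne_iff.mp hcd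
  exact (abs_sum_kronFamily_mul_le hA hj).trans (h j)

lemma mutInc_le_mutInc_kronFamily (c : ∀ i, Fin (n i)) {i : Fin N} (hi : 2 ≤ n i) :
    mutInc (A i) ≤ mutInc (kronFamily A) := by
  have := Fin.nontrivial_iff_two_le.mpr hi
  obtain ⟨p, q, hpq, hmax⟩ := exists_ne_mutInc_eq (A i)
  rw [hmax, ← sum_kronFamily_mul_update hA c]
  exact abs_sum_mul_le_mutInc _ fun h => hpq <| by simpa using congrFun h i

end kronFamily

theorem stmt11 {N : ℕ} (hN : 0 < N) {m n : Fin N → ℕ} (hn : ∀ i, 2 ≤ n i)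
    (A : ∀ i, Matrix (Fin (m i)) (Fin (n i)) ℝ)
    (hA : ∀ i j, ∑ k, (A i k j) ^ 2 = 1) :
    mutInc (kronFamily A) =
      Finset.univ.sup' ⟨⟨0, hN⟩, Finset.mem_univ _⟩ (fun i => mutInc (A i)) := by
  have hle_sup : ∀ i, mutInc (A i) ≤ Finset.univ.sup' ⟨⟨0, hN⟩, Finset.mem_univ _⟩
      (fun i => mutInc (A i)) := fun i => Finset.le_sup' (fun i => mutInc (A i)) (Finset.mem_univ i)
  let c : ∀ i, Fin (n i) := fun i => ⟨0, by have := hn i; omega⟩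
  exact le_antisymm (mutInc_kronFamily_le hA hle_sup ((mutInc_nonneg _).trans (hle_sup ⟨0, hN⟩)))
    (Finset.sup'_le _ _ fun i _ => mutInc_le_mutInc_kronFamily hA c (hn i))
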